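/- arXiv:0909.4487 — 3 statements merged into one kernel-verified Lean document; each statement's English description precedes it below -/
import Mathlib

section
/- Let W = ℝⁿ with canonical basis e_1,...,e_n and dual basis e_1*,...,e_n*. Suppose each h_i ∈ W* has the form e_a* − e_b* or ±(e_a* + e_b*) for some indices a,b. If I ⊆ {1,...,l} is a subset of size n−1 such that {h_i : i ∈ I} is linearly independent, and the set C_I = ∩_{i∈I}{h_i = 0} ∩ ∩_j{h_j ≤ 0} is a half-line ℝ_{≥0}·c_I, then there exist disjoint subsets P, N ⊆ {1,...,n} and a positive scalar μ such that c_I = μ(∑_{i∈P} e_i − ∑_{j∈N} e_j). -/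
/-- In `W = ℝⁿ`, if every functional `hᵢ` has the form `eₐ* − e_b*` or `±(eₐ* + e_b*)`,
`I` has `n−1` elements with `{hᵢ : i ∈ I}` linearly independent, and
`C_I = ⋂_{i∈I}{hᵢ = 0} ∩ ⋂_j {h_j ≤ 0}` is the half-line `ℝ₊·c_I`, then `c_I` is a
positive multiple of `∑_{i∈P} eᵢ − ∑_{j∈N} e_j` for disjoint `P, N ⊆ {1,…,n}`. -/
theorem stmt_2 {n l : ℕ} (h : Fin l → ((Fin n → ℝ) →ₗ[ℝ] ℝ))
    (hform : ∀ i : Fin l, ∃ a b : Fin n,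
      h i = (LinearMap.proj a : (Fin n → ℝ) →ₗ[ℝ] ℝ) - LinearMap.proj b ∨
      h i = (LinearMap.proj a : (Fin n → ℝ) →ₗ[ℝ] ℝ) + LinearMap.proj b ∨
      h i = -((LinearMap.proj a : (Fin n → ℝ) →ₗ[ℝ] ℝ) + LinearMap.proj b))
    (I : Finset (Fin l)) (hcard : I.card = n - 1)
    (hindep : LinearIndependent ℝ (fun i : I => h i))
    (c : Fin n → ℝ)
    (hC : {x : Fin n → ℝ | (∀ i ∈ I, h i x = 0) ∧ ∀ j : Fin l, h j x ≤ 0}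
        = {x : Fin n → ℝ | ∃ t : ℝ, 0 ≤ t ∧ x = t • c}) :
    ∃ P N : Finset (Fin n), Disjoint P N ∧ ∃ μ : ℝ, 0 < μ ∧
      c = μ • ((∑ i ∈ P, Pi.single i (1 : ℝ)) - ∑ j ∈ N, Pi.single j (1 : ℝ)) := by
  by_cases hc0 : c = 0
  · refine ⟨∅, ∅, by simp, 1, one_pos, by simp [hc0]⟩
  -- c itself is in the LHS set
  have hcmem : (∀ i ∈ I, h i c = 0) ∧ ∀ j : Fin l, h j c ≤ 0 := by
    have : c ∈ {x : Fin n → ℝ | ∃ t : ℝ, 0 ≤ t ∧ x = t • c} :=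
      ⟨1, zero_le_one, by simp⟩
    rw [← hC] at this
    exact this
  -- the coordinatewise cube of c is also in the set
  set d : Fin n → ℝ := fun k => (c k) ^ 3 with hd
  have hdmem : ∃ t : ℝ, 0 ≤ t ∧ d = t • c := by
    have hdm : d ∈ {x : Fin n → ℝ | (∀ i ∈ I, h i x = 0) ∧ ∀ j : Fin l, h j x ≤ 0} := by
      constructor
      · intro i hi
        obtain ⟨a, b, hab⟩ := hform i
        have h0 := hcmem.1 i hi
        rcases hab with h1 | h1 | h1
        · rw [h1] at h0 ⊢
          simp only [LinearMap.sub_apply, LinearMap.proj_apply] at h0 ⊢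
          show (c a) ^ 3 - (c b) ^ 3 = 0
          linear_combination ((c a) ^ 2 + c a * c b + (c b) ^ 2) * h0
        · rw [h1] at h0 ⊢
          simp only [LinearMap.add_apply, LinearMap.proj_apply] at h0 ⊢
          show (c a) ^ 3 + (c b) ^ 3 = 0
          linear_combination ((c a) ^ 2 - c a * c b + (c b) ^ 2) * h0
        · rw [h1] at h0 ⊢
          simp only [LinearMap.neg_apply, LinearMap.add_apply, LinearMap.proj_apply] at h0 ⊢
          show -((c a) ^ 3 + (c b) ^ 3) = 0
          linear_combination ((c a) ^ 2 - c a * c b + (c b) ^ 2) * h0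
      · intro j
        obtain ⟨a, b, hab⟩ := hform j
        have h0 := hcmem.2 j
        rcases hab with h1 | h1 | h1
        · rw [h1] at h0 ⊢
          simp only [LinearMap.sub_apply, LinearMap.proj_apply] at h0 ⊢
          show (c a) ^ 3 - (c b) ^ 3 ≤ 0
          nlinarith [sq_nonneg (c a + c b), sq_nonneg (c a - c b), sq_nonneg (c a),
            sq_nonneg (c b), h0]
        · rw [h1] at h0 ⊢
          simp only [LinearMap.add_apply, LinearMap.proj_apply] at h0 ⊢
          show (c a) ^ 3 + (c b) ^ 3 ≤ 0
          nlinarith [sq_nonneg (c a + c b), sq_nonneg (c a - c b), sq_nonneg (c a),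
            sq_nonneg (c b), h0]
        · rw [h1] at h0 ⊢
          simp only [LinearMap.neg_apply, LinearMap.add_apply, LinearMap.proj_apply] at h0 ⊢
          show -((c a) ^ 3 + (c b) ^ 3) ≤ 0
          nlinarith [sq_nonneg (c a + c b), sq_nonneg (c a - c b), sq_nonneg (c a),
            sq_nonneg (c b), h0]
    rw [hC] at hdm
    exact hdm
  obtain ⟨t, ht0, hdt⟩ := hdmem
  have hcube : ∀ k, (c k) ^ 3 = t * c k := fun k => by
    have := congrFun hdt k
    simpa [hd] using this
  -- t is positive
  obtain ⟨k0, hk0⟩ : ∃ k, c k ≠ 0 := by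
    by_contra hcon
    push_neg at hcon
    exact hc0 (funext hcon)
  have hsq : ∀ k, c k ≠ 0 → (c k) ^ 2 = t := by
    intro k hk
    have h3 : (c k) ^ 2 * c k = t * c k := by linear_combination hcube k
    exact mul_right_cancel₀ hk h3
  have ht : 0 < t := by
    rw [← hsq k0 hk0]
    positivity
  -- μ is the square root of t
  set μ : ℝ := Real.sqrt t with hμ
  have hμpos : 0 < μ := Real.sqrt_pos.mpr ht
  have hμsq : μ ^ 2 = t := Real.sq_sqrt ht0
  refine ⟨Finset.univ.filter (fun i => 0 < c i), Finset.univ.filter (fun i => c i < 0),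
    ?_, μ, hμpos, ?_⟩
  · rw [Finset.disjoint_left]
    intro i h1 h2
    simp only [Finset.mem_filter] at h1 h2
    linarith [h1.2, h2.2]
  · funext k
    have hsumP : (∑ i ∈ Finset.univ.filter (fun i => 0 < c i), Pi.single i (1 : ℝ)) k
        = if 0 < c k then (1 : ℝ) else 0 := by
      rw [Finset.sum_apply]
      simp [Pi.single_apply, Finset.sum_ite_eq', Finset.mem_filter]
    have hsumN : (∑ i ∈ Finset.univ.filter (fun i => c i < 0), Pi.single i (1 : ℝ)) k
        = if c k < 0 then (1 : ℝ) else 0 := by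
      rw [Finset.sum_apply]
      simp [Pi.single_apply, Finset.sum_ite_eq', Finset.mem_filter]
    simp only [Pi.smul_apply, Pi.sub_apply, smul_eq_mul, hsumP, hsumN]
    rcases lt_trichotomy (c k) 0 with hk | hk | hk
    · have h2 : (c k) ^ 2 = μ ^ 2 := by rw [hμsq]; exact hsq k (ne_of_lt hk)
      have hfac : (c k - μ) * (c k + μ) = 0 := by linear_combination h2
      rcases mul_eq_zero.mp hfac with hf | hf
      · linarith
      · rw [if_neg (by linarith), if_pos hk]
        linarith
    · simp [hk]
    · have h2 : (c k) ^ 2 = μ ^ 2 := by rw [hμsq]; exact hsq k (ne_of_gt hk)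
      have hfac : (c k - μ) * (c k + μ) = 0 := by linear_combination h2
      rcases mul_eq_zero.mp hfac with hf | hf
      · rw [if_pos hk, if_neg (by linarith)]
        linarith
      · linarith
end

section
/- Let 𝔥 be the Lie algebra of a compact Lie group H with a negative-definite invariant bilinear form ⟨·,·⟩, and let 𝔥^ℂ = 𝔥 ⊕ i𝔥 be its complexification with the real positive-definite inner product ⟨u_r + i u_i, v_r + i v_i⟩_ℝ := −⟨u_r,v_r⟩ − ⟨u_i,v_i⟩. If u = u_r + i u_i minimizes the norm ‖·‖² on its adjoint orbit (i.e., ⟨u,[v,u]⟩_ℝ = 0 for all v ∈ 𝔥^ℂ), then [u_r, u_i] = 0. -/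
/-- Let `𝔥` be a real Lie algebra with a negative-definite invariant symmetric bilinear
form.  If `u = u_r + i u_i` in the complexification minimizes the norm on its adjoint
orbit, i.e. `⟨u,[v,u]⟩_ℝ = 0` for all `v = v_r + i v_i` (written out in real and
imaginary components), then `[u_r, u_i] = 0`. -/
theorem stmt_5 {H : Type*} [LieRing H] [LieAlgebra ℝ H]
    (B : H →ₗ[ℝ] H →ₗ[ℝ] ℝ)
    (hsymm : ∀ x y : H, B x y = B y x)
    (hinv : ∀ x y z : H, B ⁅x, y⁆ z + B y ⁅x, z⁆ = 0)
    (hneg : ∀ x : H, x ≠ 0 → B x x < 0)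
    (ur ui : H)
    (hmin : ∀ vr vi : H,
      - B ur (⁅vr, ur⁆ - ⁅vi, ui⁆) - B ui (⁅vr, ui⁆ + ⁅vi, ur⁆) = 0) :
    ⁅ur, ui⁆ = 0 := by
  have key : ∀ vi : H, B ui ⁅vi, ur⁆ = 0 := by
    intro vi
    have h1 := hmin 0 vi
    simp only [lie_zero, zero_lie, zero_sub, zero_add, map_neg, map_sub] at h1
    -- h1 : -(-(B ur ⁅vi, ui⁆)) - B ui ⁅vi, ur⁆ = 0 or similar
    have h2 := hinv vi ur ui
    have h3 := hsymm ⁅vi, ur⁆ ui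
    linarith
  have h4 := key (-⁅ur, ui⁆)
  rw [neg_lie] at h4
  have h5 : ⁅⁅ur, ui⁆, ur⁆ = -⁅ur, ⁅ur, ui⁆⁆ := by rw [← lie_skew]
  rw [h5] at h4
  simp only [map_neg, neg_neg, neg_eq_zero] at h4
  have h6 := hinv ur ui ⁅ur, ui⁆
  have h7 : B ⁅ur, ui⁆ ⁅ur, ui⁆ = 0 := by linarith
  by_contra h
  exact absurd h7 (ne_of_lt (hneg _ h))
end

section
/- Let (V, φ) be an L-twisted Sp(2n,ℝ)-Higgs pair with φ = 0, i.e., V a holomorphic vector bundle of rank n on a compact Riemann surface and φ = (β,γ) = 0. Then (V, 0) is α-semistable (in the sense that for every filtration 0 ⊆ V₁ ⊆ V₂ ⊆ V with 0 ∈ H⁰ of the associated bundle the inequality deg V − deg V₂ − deg V₁ ≥ α(n − n₂ − n₁) holds) if and only if α = μ(V) = deg V / rk V and V is a semistable vector bundle. -/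
/-- For an `L`-twisted `Sp(2n,ℝ)`-Higgs pair `(V,φ)` with `φ = 0`, the condition
`φ ∈ H⁰(N(𝒱,λ))` is vacuous, so `α`-semistability reads: for every chain of
subbundles `0 ⊆ V₁ ⊆ V₂ ⊆ V`, `deg V − deg V₂ − deg V₁ ≥ α(n − n₂ − n₁)`.
We model the subbundles of `V` by a partially ordered type `Sub` with `⊥` (the zero
subbundle) and `⊤ = V`, equipped with degree and rank functions.  Then `(V,0)` is
`α`-semistable iff `α = μ(V) = deg V / rk V` and `V` is semistable
(`μ(W) ≤ μ(V)` for every nonzero subbundle `W`). -/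
theorem stmt_15 {Sub : Type*} [PartialOrder Sub] [OrderBot Sub] [OrderTop Sub]
    (deg : Sub → ℤ) (rk : Sub → ℕ) (α : ℚ) (n : ℕ) (hn : 0 < n)
    (hrktop : rk ⊤ = n) (hrkbot : rk ⊥ = 0) (hdegbot : deg ⊥ = 0)
    (hrkpos : ∀ W : Sub, W ≠ ⊥ → 0 < rk W) :
    (∀ V₁ V₂ : Sub, V₁ ≤ V₂ →
        α * ((n : ℚ) - (rk V₂ : ℚ) - (rk V₁ : ℚ)) ≤
          (deg (⊤ : Sub) : ℚ) - (deg V₂ : ℚ) - (deg V₁ : ℚ)) ↔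
      (α = (deg (⊤ : Sub) : ℚ) / (n : ℚ) ∧
        ∀ W : Sub, W ≠ ⊥ →
          (deg W : ℚ) / (rk W : ℚ) ≤ (deg (⊤ : Sub) : ℚ) / (n : ℚ)) := by
  have hn' : (0:ℚ) < (n:ℚ) := by exact_mod_cast hn
  constructor
  · intro h
    have h1 := h ⊥ ⊥ le_rfl
    have h2 := h ⊤ ⊤ le_rfl
    rw [hrkbot, hdegbot] at h1
    rw [hrktop] at h2
    push_cast at h1 h2
    have hαn : α * (n:ℚ) = (deg (⊤ : Sub) : ℚ) := by nlinarith
    have hα : α = (deg (⊤ : Sub) : ℚ) / (n : ℚ) := by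
      rw [← hαn]; field_simp
    refine ⟨hα, fun W hW => ?_⟩
    have hW' : (0:ℚ) < (rk W : ℚ) := by exact_mod_cast hrkpos W hW
    have h3 := h ⊥ W bot_le
    rw [hrkbot, hdegbot] at h3
    push_cast at h3
    rw [div_le_div_iff₀ hW' hn']
    nlinarith
  · rintro ⟨hα, hss⟩ V₁ V₂ _
    have hαn : α * (n:ℚ) = (deg (⊤ : Sub) : ℚ) := by
      rw [hα]; field_simp
    have key : ∀ W : Sub, (deg W : ℚ) ≤ α * (rk W : ℚ) := by
      intro W
      by_cases hW : W = ⊥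
      · simp [hW, hdegbot, hrkbot]
      · have hW' : (0:ℚ) < (rk W : ℚ) := by exact_mod_cast hrkpos W hW
        have := hss W hW
        rw [← hα, div_le_iff₀ hW'] at this
        linarith [this]
    have k1 := key V₁
    have k2 := key V₂
    nlinarith
end
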